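/- Suppose assumption (H_N) holds and let λ∈(0,1] with N·λ∈ℕ. Then for every (𝐢,𝐣)∈I×J and every k∈K, the numbers N^{2n}·d^0_λ(𝐢,𝐣) and N^{2n}·d^k_λ(𝐢,𝐣) are integers of absolute value at most n^{n/2}·N^{2n}. -/

import Mathlib

open Filter Set Topology

noncomputable def matVal {α β : Type*} [Fintype α] [Fintype β] (M : α → β → ℝ) : ℝ :=
  ⨆ x : stdSimplex ℝ α, ⨅ y : stdSimplex ℝ β, ∑ a, ∑ b, x.1 a * M a b * y.1 b

def bitsize (p : ℕ) : ℕ := Nat.clog 2 (p + 1)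

noncomputable def shapley {n : ℕ} {A B : Fin n → Type*}
    [∀ k, Fintype (A k)] [∀ k, Fintype (B k)]
    (g : (k : Fin n) → A k → B k → ℝ) (q : (k : Fin n) → A k → B k → Fin n → ℝ)
    (lam : ℝ) (u : Fin n → ℝ) : Fin n → ℝ :=
  fun l => matVal (fun (i : A l) (j : B l) =>
    lam * g l i j + (1 - lam) * ∑ l', q l i j l' * u l')

noncomputable def dZero {n : ℕ} {A B : Fin n → Type*}
    (q : (k : Fin n) → A k → B k → Fin n → ℝ)
    (ii : (k : Fin n) → A k) (jj : (k : Fin n) → B k) (lam : ℝ) : ℝ :=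
  Matrix.det (1 - (1 - lam) • Matrix.of (fun l l' => q l (ii l) (jj l) l'))

noncomputable def dK {n : ℕ} {A B : Fin n → Type*}
    (g : (k : Fin n) → A k → B k → ℝ) (q : (k : Fin n) → A k → B k → Fin n → ℝ)
    (k : Fin n) (ii : (k : Fin n) → A k) (jj : (k : Fin n) → B k) (lam : ℝ) : ℝ :=
  Matrix.det (Matrix.updateCol
    (1 - (1 - lam) • Matrix.of (fun l l' => q l (ii l) (jj l) l')) k
    (fun l => g l (ii l) (jj l)))

noncomputable def Wmat {n : ℕ} {A B : Fin n → Type*}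
    (g : (k : Fin n) → A k → B k → ℝ) (q : (k : Fin n) → A k → B k → Fin n → ℝ)
    (k : Fin n) (lam z : ℝ) :
    ((k : Fin n) → A k) → ((k : Fin n) → B k) → ℝ :=
  fun ii jj => dK g q k ii jj lam - z * dZero q ii jj lam

/-!
Under (H_N) with `Nλ ∈ ℕ`, every entry of `Id - (1 - λ) Q` and of `g` is an integer multiple of
`1 / N²`, so `N^{2n}` times either determinant is the determinant of an integer matrix. All these
entries lie in `[-1, 1]`, and for such a matrix `det M ^ 2 ≤ n ^ n`: the eigenvalues of `M Mᵀ` are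
nonnegative with product `det M ^ 2` and sum `∑ M_ij ^ 2 ≤ n ^ 2`, so AM-GM bounds their product
by `n ^ n`.
-/

theorem Real.prod_le_sum_div_card_pow {ι : Type*} [Fintype ι] (f : ι → ℝ) (hf : ∀ i, 0 ≤ f i) :
    ∏ i, f i ≤ ((∑ i, f i) / Fintype.card ι) ^ Fintype.card ι := by
  cases isEmpty_or_nonempty ι
  · simp
  have hcard : (Fintype.card ι : ℝ) ≠ 0 := by positivity
  have amgm := Real.geom_mean_le_arith_mean_weighted Finset.univ (fun _ ↦ (Fintype.card ι : ℝ)⁻¹)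
    f (fun _ _ ↦ by positivity) (by simp [hcard]) (fun i _ ↦ hf i)
  rw [Real.finsetProd_rpow _ _ (fun i _ ↦ hf i), ← Finset.mul_sum, inv_mul_eq_div] at amgm
  have hprod : 0 ≤ ∏ i, f i := Finset.prod_nonneg fun i _ ↦ hf i
  calc ∏ i, f i = ((∏ i, f i) ^ (Fintype.card ι : ℝ)⁻¹) ^ Fintype.card ι :=
        (Real.rpow_inv_natCast_pow hprod Fintype.card_ne_zero).symm
    _ ≤ _ := pow_le_pow_left₀ (by positivity) amgm _

theorem mem_Icc_of_exists_eq_div {N : ℕ} {x : ℝ} (h : ∃ m : ℕ, m ≤ N ∧ x = m / N) :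
    x ∈ Icc 0 1 := by
  obtain ⟨m, hm, rfl⟩ := h
  exact ⟨by positivity, div_le_one_of_le₀ (by exact_mod_cast hm) (Nat.cast_nonneg N)⟩

theorem exists_intCast_eq_mul_of_eq_div {m N : ℕ} {x : ℝ} (h : x = m / N) :
    ∃ z : ℤ, (z : ℝ) = N * x := by
  subst h
  rcases eq_or_ne (N : ℝ) 0 with hN | hN
  · exact ⟨0, by simp [hN]⟩
  · exact ⟨m, by rw [mul_div_cancel₀ _ hN]; simp⟩

namespace Matrix

section Entries

variable {ι : Type*} [DecidableEq ι]

theorem forall_updateCol_apply {α : Type*} {P : α → Prop} {M : Matrix ι ι α} {v : ι → α}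
    (hM : ∀ i j, P (M i j)) (hv : ∀ i, P (v i)) (k : ι) : ∀ i j, P (updateCol M k v i j) := by
  intro i j
  rw [updateCol_apply]
  split_ifs
  exacts [hv i, hM i j]

theorem abs_one_sub_smul_apply_le_one {t : ℝ} (ht : t ∈ Icc 0 1) {Q : Matrix ι ι ℝ}
    (hQ : ∀ i j, Q i j ∈ Icc 0 1) (i j : ι) : |(1 - t • Q) i j| ≤ 1 := by
  obtain ⟨hQ0, hQ1⟩ := hQ i j
  obtain ⟨ht0, ht1⟩ := ht
  have htQ : t * Q i j ≤ 1 := mul_le_one₀ ht1 hQ0 hQ1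
  rw [sub_apply, smul_apply, smul_eq_mul, one_apply, abs_le]
  split_ifs <;> constructor <;> nlinarith

theorem exists_intCast_eq_sq_mul_one_sub_smul_apply {N : ℕ} {t : ℝ}
    (ht : ∃ z : ℤ, (z : ℝ) = N * t) {Q : Matrix ι ι ℝ} (hQ : ∀ i j, ∃ z : ℤ, (z : ℝ) = N * Q i j)
    (i j : ι) : ∃ z : ℤ, (z : ℝ) = (N : ℝ) ^ 2 * (1 - t • Q) i j := by
  obtain ⟨a, ha⟩ := ht
  obtain ⟨b, hb⟩ := hQ i j
  refine ⟨(N : ℤ) ^ 2 * (1 : Matrix ι ι ℤ) i j - a * b, ?_⟩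
  rw [sub_apply, smul_apply, smul_eq_mul, one_apply, one_apply]
  push_cast [ha, hb]
  split_ifs <;> ring

end Entries

section Determinant

variable {ι : Type*} [Fintype ι] [DecidableEq ι]

theorem det_sq_le_sum_sq_div_card_pow (M : Matrix ι ι ℝ) :
    M.det ^ 2 ≤ ((∑ i, ∑ j, M i j ^ 2) / Fintype.card ι) ^ Fintype.card ι := by
  have hP : (M * Mᴴ).PosSemidef := posSemidef_self_mul_conjTranspose M
  have hdet : M.det ^ 2 = ∏ i, hP.isHermitian.eigenvalues i := by
    simpa [sq, det_mul] using hP.isHermitian.det_eq_prod_eigenvalues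
  have htrace : ∑ i, ∑ j, M i j ^ 2 = ∑ i, hP.isHermitian.eigenvalues i := by
    have := hP.isHermitian.trace_eq_sum_eigenvalues
    simp only [trace, diag, mul_apply, conjTranspose_apply, star_trivial] at this
    simpa [sq] using this
  rw [hdet, htrace]
  exact Real.prod_le_sum_div_card_pow _ hP.eigenvalues_nonneg

theorem abs_det_le_sqrt_card_pow (M : Matrix ι ι ℝ) (hM : ∀ i j, |M i j| ≤ 1) :
    |M.det| ≤ √(Fintype.card ι) ^ Fintype.card ι := by
  set n := Fintype.card ι
  have hsum : ∑ i, ∑ j, M i j ^ 2 ≤ (n : ℝ) * n := by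
    calc ∑ i, ∑ j, M i j ^ 2 ≤ ∑ _i : ι, ∑ _j : ι, (1 : ℝ) :=
          Finset.sum_le_sum fun i _ ↦ Finset.sum_le_sum fun j _ ↦
            (sq_le_one_iff_abs_le_one _).mpr (hM i j)
      _ = n * n := by simp [n]
  refine abs_le_of_sq_le_sq ?_ (by positivity)
  calc M.det ^ 2 ≤ ((∑ i, ∑ j, M i j ^ 2) / n) ^ n := det_sq_le_sum_sq_div_card_pow M
    _ ≤ ((n : ℝ) * n / n) ^ n := by gcongr
    _ = (√n ^ n) ^ 2 := by
        rw [mul_self_div_self, ← pow_mul, mul_comm, pow_mul, Real.sq_sqrt (Nat.cast_nonneg _)]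

theorem exists_intCast_eq_pow_mul_det (c : ℝ) (M : Matrix ι ι ℝ)
    (hM : ∀ i j, ∃ z : ℤ, (z : ℝ) = c * M i j) :
    ∃ a : ℤ, (a : ℝ) = c ^ Fintype.card ι * M.det := by
  choose Z hZ using hM
  refine ⟨(of Z).det, ?_⟩
  have hmap : (Int.castRingHom ℝ).mapMatrix (of Z) = c • M := by
    ext i j; simp [hZ]
  rw [← det_smul, ← hmap, ← RingHom.map_det, eq_intCast]

end Determinant

theorem exists_intCast_eq_pow_mul_det_and_abs_le {n N : ℕ} (M : Matrix (Fin n) (Fin n) ℝ)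
    (hint : ∀ i j, ∃ z : ℤ, (z : ℝ) = (N : ℝ) ^ 2 * M i j) (habs : ∀ i j, |M i j| ≤ 1) :
    ∃ a : ℤ, (a : ℝ) = (N : ℝ) ^ (2 * n) * M.det ∧ |(a : ℝ)| ≤ √n ^ n * (N : ℝ) ^ (2 * n) := by
  obtain ⟨a, ha⟩ := exists_intCast_eq_pow_mul_det _ M hint
  rw [Fintype.card_fin, ← pow_mul] at ha
  refine ⟨a, ha, ?_⟩
  have hdet := abs_det_le_sqrt_card_pow M habs
  rw [Fintype.card_fin] at hdet
  rw [ha, abs_mul, abs_of_nonneg (by positivity), mul_comm]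
  gcongr

end Matrix

theorem stmt8_general
    {n : ℕ}
    {A B : Fin n → Type*}
    (g : (k : Fin n) → A k → B k → ℝ)
    (q : (k : Fin n) → A k → B k → Fin n → ℝ)
    (N : ℕ)
    (hgN : ∀ k i j, ∃ m : ℕ, m ≤ N ∧ g k i j = (m : ℝ) / N)
    (hqN : ∀ k i j l, ∃ m : ℕ, m ≤ N ∧ q k i j l = (m : ℝ) / N)
    (lam : ℝ) (hlam : lam ∈ Set.Ioc (0:ℝ) 1) (hNlam : ∃ m : ℕ, (m : ℝ) = N * lam) :
    ∀ (ii : (k : Fin n) → A k) (jj : (k : Fin n) → B k) (k : Fin n),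
      (∃ a : ℤ, (a : ℝ) = (N : ℝ) ^ (2 * n) * dZero q ii jj lam ∧
        |(a : ℝ)| ≤ Real.sqrt n ^ n * (N : ℝ) ^ (2 * n)) ∧
      (∃ a : ℤ, (a : ℝ) = (N : ℝ) ^ (2 * n) * dK g q k ii jj lam ∧
        |(a : ℝ)| ≤ Real.sqrt n ^ n * (N : ℝ) ^ (2 * n)) := by
  intro ii jj k
  set G : Fin n → ℝ := fun l => g l (ii l) (jj l)
  have hQ_unit l l' := mem_Icc_of_exists_eq_div (hqN l (ii l) (jj l) l')
  have hQ_int l l' :=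
    (hqN l (ii l) (jj l) l').elim fun _ hm ↦ exists_intCast_eq_mul_of_eq_div hm.2
  have hG_abs l : |G l| ≤ 1 := by
    obtain ⟨h0, h1⟩ := mem_Icc_of_exists_eq_div (hgN l (ii l) (jj l))
    exact abs_le.mpr ⟨by linarith, h1⟩
  have hG_int l : ∃ z : ℤ, (z : ℝ) = (N : ℝ) ^ 2 * G l := by
    obtain ⟨m, -, hm⟩ := hgN l (ii l) (jj l)
    obtain ⟨z, hz⟩ := exists_intCast_eq_mul_of_eq_div hm
    exact ⟨N * z, by push_cast [hz]; ring⟩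
  have ht_unit : 1 - lam ∈ Icc 0 1 := ⟨by linarith [hlam.2], by linarith [hlam.1]⟩
  have ht_int : ∃ z : ℤ, (z : ℝ) = N * (1 - lam) := by
    obtain ⟨m, hm⟩ := hNlam
    exact ⟨N - m, by push_cast [hm]; ring⟩
  have h0_abs := Matrix.abs_one_sub_smul_apply_le_one ht_unit (Q := Matrix.of _) hQ_unit
  have h0_int :=
    Matrix.exists_intCast_eq_sq_mul_one_sub_smul_apply ht_int (Q := Matrix.of _) hQ_int
  refine ⟨Matrix.exists_intCast_eq_pow_mul_det_and_abs_le _ h0_int h0_abs,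
    Matrix.exists_intCast_eq_pow_mul_det_and_abs_le _ ?_ ?_⟩
  exacts [Matrix.forall_updateCol_apply (P := fun x ↦ ∃ z : ℤ, (z : ℝ) = (N : ℝ) ^ 2 * x)
      h0_int hG_int k,
    Matrix.forall_updateCol_apply (P := fun x ↦ |x| ≤ 1) h0_abs hG_abs k]

/-- Under (H_N), for λ ∈ (0,1] with N·λ ∈ ℕ, for every pair of pure stationary
strategies and every k, N^{2n}·d^0_λ(𝐢,𝐣) and N^{2n}·d^k_λ(𝐢,𝐣) are integers of absolute
value at most n^{n/2}·N^{2n}. -/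
theorem stmt8
    {n : ℕ} (hn : 1 ≤ n)
    {A B : Fin n → Type*} [∀ k, Fintype (A k)] [∀ k, Fintype (B k)]
    [∀ k, Nonempty (A k)] [∀ k, Nonempty (B k)]
    (g : (k : Fin n) → A k → B k → ℝ)
    (q : (k : Fin n) → A k → B k → Fin n → ℝ)
    (hq0 : ∀ k i j l, 0 ≤ q k i j l)
    (hq1 : ∀ k i j, ∑ l, q k i j l = 1)
    (N : ℕ) (hN : 1 ≤ N)
    (hgN : ∀ k i j, ∃ m : ℕ, m ≤ N ∧ g k i j = (m : ℝ) / N)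
    (hqN : ∀ k i j l, ∃ m : ℕ, m ≤ N ∧ q k i j l = (m : ℝ) / N)
    (lam : ℝ) (hlam : lam ∈ Set.Ioc (0:ℝ) 1) (hNlam : ∃ m : ℕ, (m : ℝ) = N * lam) :
    ∀ (ii : (k : Fin n) → A k) (jj : (k : Fin n) → B k) (k : Fin n),
      (∃ a : ℤ, (a : ℝ) = (N : ℝ) ^ (2 * n) * dZero q ii jj lam ∧
        |(a : ℝ)| ≤ Real.sqrt n ^ n * (N : ℝ) ^ (2 * n)) ∧
      (∃ a : ℤ, (a : ℝ) = (N : ℝ) ^ (2 * n) * dK g q k ii jj lam ∧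
        |(a : ℝ)| ≤ Real.sqrt n ^ n * (N : ℝ) ^ (2 * n)) :=
  stmt8_general g q N hgN hqN lam hlam hNlam
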